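/- arXiv:2302.06224 — 5 statements merged into one kernel-verified Lean document; each statement's English description precedes it below -/
import Mathlib

section
/- For every k ≥ 0, ‖3^k‖ = 3k for k ≥ 1 and ‖2·3^k‖ = 3k + 2; moreover 2·3^k is the largest integer whose complexity equals 3k+2. -/
/-- `ExprCost n c` : there is an arithmetic expression for `n` built from the
constant `1`, addition and multiplication (and parentheses) using exactly `c` ones. -/
inductive ExprCost : ℕ → ℕ → Prop
  | one : ExprCost 1 1
  | add {a b c d : ℕ} : ExprCost a c → ExprCost b d → ExprCost (a + b) (c + d)
  | mul {a b c d : ℕ} : ExprCost a c → ExprCost b d → ExprCost (a * b) (c + d)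

/-- The integer complexity `‖n‖`: the least number of `1`'s needed to write `n`. -/
noncomputable def cpx (n : ℕ) : ℕ := sInf {c | ExprCost n c}

/-!
An expression with `c` ones evaluates to at most `maxValue c`, which is `3^j`, `4·3^(j-1)` or
`2·3^j` for `c = 3j`, `3j+1`, `3j+2` (Selfridge's bound): `maxValue` is superadditive and
supermultiplicative on positive arguments, and peeling off a factor `3` reduces this to finitely
many cases. Conversely `maxValue c` is written with `c` ones as `1`, `2` or `4` times a power of
`3`, and `maxValue` is strictly increasing, so `‖maxValue c‖ = c` and `maxValue c` is the largest
number of complexity `c`.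
-/

def maxValue : ℕ → ℕ
  | 0 => 0
  | 1 => 1
  | 2 => 2
  | 3 => 3
  | 4 => 4
  | n + 5 => 3 * maxValue (n + 2)

theorem maxValue_add_three {n : ℕ} (hn : 2 ≤ n) : maxValue (n + 3) = 3 * maxValue n := by
  obtain ⟨m, rfl⟩ : ∃ m, n = m + 2 := ⟨n - 2, by omega⟩
  rfl

theorem maxValue_add_le_and_mul_le {a b : ℕ} (ha : 1 ≤ a) (hb : 1 ≤ b) :
    maxValue a + maxValue b ≤ maxValue (a + b) ∧
      maxValue a * maxValue b ≤ maxValue (a + b) := by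
  induction hs : a + b using Nat.strong_induction_on generalizing a b with
  | _ s ih =>
  wlog hab : a ≤ b generalizing a b
  · simpa only [add_comm, mul_comm] using this hb ha (by omega) (by omega)
  rcases Nat.lt_or_ge b 5 with hb5 | hb5
  · have ha5 : a < 5 := by omega
    subst hs
    interval_cases a <;> interval_cases b <;> decide
  obtain ⟨z, rfl⟩ : ∃ z, b = z + 3 := ⟨b - 3, by omega⟩
  obtain ⟨hadd, hmul⟩ := ih (a + z) (by omega) ha (by omega) rfl
  rw [← hs, ← add_assoc, maxValue_add_three (by omega), maxValue_add_three (by omega)]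
  constructor <;> linarith

theorem maxValue_strictMono : StrictMono maxValue := by
  refine strictMono_nat_of_lt_succ fun n => ?_
  rcases Nat.eq_zero_or_pos n with rfl | hn
  · decide
  · have := (maxValue_add_le_and_mul_le hn le_rfl).1
    simp only [maxValue] at this
    omega

theorem maxValue_three_mul {k : ℕ} (hk : 1 ≤ k) : maxValue (3 * k) = 3 ^ k := by
  induction k, hk using Nat.le_induction with
  | base => rfl
  | succ k hk ih => rw [mul_add_one, maxValue_add_three (by omega), ih, pow_succ, mul_comm]

theorem maxValue_three_mul_add_two (k : ℕ) : maxValue (3 * k + 2) = 2 * 3 ^ k := by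
  induction k with
  | zero => rfl
  | succ k ih =>
    rw [show 3 * (k + 1) + 2 = 3 * k + 2 + 3 by ring, maxValue_add_three (by omega), ih, pow_succ]
    ring

theorem ExprCost.one_le_cost {n c : ℕ} (h : ExprCost n c) : 1 ≤ c := by
  induction h <;> omega

theorem ExprCost.le_maxValue {n c : ℕ} (h : ExprCost n c) : n ≤ maxValue c := by
  induction h with
  | one => exact le_rfl
  | add ha hb iha ihb =>
    have := (maxValue_add_le_and_mul_le ha.one_le_cost hb.one_le_cost).1
    omega
  | mul ha hb iha ihb =>
    exact (Nat.mul_le_mul iha ihb).trans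
      (maxValue_add_le_and_mul_le ha.one_le_cost hb.one_le_cost).2

theorem exprCost_self {n : ℕ} (hn : 1 ≤ n) : ExprCost n n := by
  induction n, hn using Nat.le_induction with
  | base => exact .one
  | succ n _ ih => exact .add ih .one

theorem exprCost_maxValue {c : ℕ} (hc : 1 ≤ c) : ExprCost (maxValue c) c := by
  induction c using Nat.strong_induction_on with
  | _ c ih =>
  by_cases hc4 : c ≤ 4
  · have hfix : maxValue c = c := by interval_cases c <;> rfl
    rw [hfix]
    exact exprCost_self hc
  obtain ⟨n, rfl⟩ : ∃ n, c = n + 3 := ⟨c - 3, by omega⟩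
  rw [maxValue_add_three (by omega), mul_comm]
  exact .mul (ih n (by omega) (by omega)) (exprCost_self (by norm_num))

theorem exprCost_cpx {n : ℕ} (hn : 1 ≤ n) : ExprCost n (cpx n) :=
  Nat.sInf_mem ⟨n, exprCost_self hn⟩

theorem le_maxValue_cpx {n : ℕ} (hn : 1 ≤ n) : n ≤ maxValue (cpx n) :=
  (exprCost_cpx hn).le_maxValue

theorem cpx_maxValue {c : ℕ} (hc : 1 ≤ c) : cpx (maxValue c) = c := by
  have hpos : 1 ≤ maxValue c := maxValue_strictMono hc
  refine le_antisymm (Nat.sInf_le (exprCost_maxValue hc)) ?_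
  exact maxValue_strictMono.le_iff_le.mp (le_maxValue_cpx hpos)

theorem cpx_pow_three (k : ℕ) :
    (1 ≤ k → cpx (3 ^ k) = 3 * k) ∧ cpx (2 * 3 ^ k) = 3 * k + 2 ∧
      ∀ m : ℕ, 0 < m → cpx m = 3 * k + 2 → m ≤ 2 * 3 ^ k := by
  refine ⟨fun hk => ?_, ?_, fun m hm hcpx => ?_⟩
  · rw [← maxValue_three_mul hk, cpx_maxValue (by omega)]
  · rw [← maxValue_three_mul_add_two, cpx_maxValue (by omega)]
  · rw [← maxValue_three_mul_add_two, ← hcpx]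
    exact le_maxValue_cpx hm
end

section
/- Let K ⊂ [0,∞) be a compact set, well-ordered by the reverse usual order with order type ω^ω + 1, and satisfying ρ·K^(μ) = K for some real ρ > 1 and natural number μ ≥ 1, where K^(μ) denotes the μ-th derived set (set of accumulation points iterated μ times). Then the intersection of all derived sets ⋂_{n≥0} K^(n) equals {0}; in particular the element of K in position ω^ω (its minimum) is 0. -/
open Ordinal Filter Topology Set

noncomputable def iterDeriv (A : Set ℝ) (n : ℕ) : Set ℝ := (derivedSet (X := ℝ))^[n] A

noncomputable def wOmega : Ordinal.{0} := Ordinal.omega0 ^ Ordinal.omega0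

/-- An enumeration of `K ⊆ ℝ` witnessing that `K`, with the reverse of the usual order,
is well-ordered with order type `ω ^ ω + 1`: its elements are exactly `e α` for
`α ≤ ω ^ ω`, and the enumeration is strictly order-reversing. `e α` is the element
written `K[α]`. -/
structure OrdEnum (K : Set ℝ) where
  e : Ordinal.{0} → ℝ
  mem : ∀ α ≤ wOmega, e α ∈ K
  surj : ∀ x ∈ K, ∃ α ≤ wOmega, e α = x
  anti : ∀ ⦃α β : Ordinal.{0}⦄, α ≤ wOmega → β ≤ wOmega → (α < β ↔ e β < e α)

structure SubEnum (S : Set ℝ) where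
  e : Ordinal.{0} → ℝ
  mem : ∀ α < wOmega, e α ∈ S
  surj : ∀ x ∈ S, ∃ α < wOmega, e α = x
  anti : ∀ ⦃α β : Ordinal.{0}⦄, α < wOmega → β < wOmega → (α < β ↔ e β < e α)

def SelfSimilar (K : Set ℝ) (ρ : ℝ) (μ : ℕ) : Prop :=
  IsCompact K ∧ K ⊆ Set.Ici 0 ∧ 1 < ρ ∧ 1 ≤ μ ∧
    (fun x => ρ * x) '' iterDeriv K μ = K ∧ Nonempty (OrdEnum K)

/-!
The scaling `x ↦ ρ x` is a homeomorphism, so it commutes with taking derived sets, and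
`ρ K^(μ) = K` iterates to `ρ^k K^(μ k) = K`. Every point of `⋂ₙ K^(n)` therefore has
`ρ^k x ∈ K ⊆ [0, max K]` for all `k`, which forces `x = 0`; the intersection is nonempty
by Cantor's intersection theorem, since each `K^(μ k)` is a rescaled copy of `K`. Finally
`K[ω^ω]` is the least element of `K`, and `0 = min K`.
-/

namespace Homeomorph

variable {X Y : Type*} [TopologicalSpace X] [TopologicalSpace Y]

theorem image_derivedSet (e : X ≃ₜ Y) (A : Set X) :
    e '' derivedSet A = derivedSet (e '' A) := by
  refine (e.continuous.image_derivedSet e.injective).antisymm fun y hy => ?_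
  have hy' := e.symm.continuous.image_derivedSet e.symm.injective ⟨y, hy, rfl⟩
  rw [e.image_symm, e.preimage_image] at hy'
  exact ⟨e.symm y, hy', e.apply_symm_apply y⟩

theorem image_iterate_derivedSet (e : X ≃ₜ X) (A : Set X) (n : ℕ) :
    e '' derivedSet^[n] A = derivedSet^[n] (e '' A) := by
  induction n with
  | zero => rfl
  | succ n ih =>
    rw [Function.iterate_succ_apply', Function.iterate_succ_apply', e.image_derivedSet, ih]

end Homeomorph

theorem iterDeriv_add (A : Set ℝ) (m n : ℕ) :
    iterDeriv A (m + n) = iterDeriv (iterDeriv A n) m :=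
  Function.iterate_add_apply _ m n A

theorem iterDeriv_image_mul {c : ℝ} (hc : c ≠ 0) (A : Set ℝ) (n : ℕ) :
    iterDeriv ((c * ·) '' A) n = (c * ·) '' iterDeriv A n := by
  simpa only [iterDeriv, Homeomorph.coe_mulLeft₀] using
    ((Homeomorph.mulLeft₀ c hc).image_iterate_derivedSet A n).symm

theorem isClosed_iterDeriv {A : Set ℝ} (hA : IsClosed A) : ∀ n, IsClosed (iterDeriv A n)
  | 0 => hA
  | n + 1 => by
    rw [iterDeriv, Function.iterate_succ_apply']
    exact isClosed_derivedSet _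

theorem iterDeriv_antitone {A : Set ℝ} (hA : IsClosed A) : Antitone (iterDeriv A) :=
  antitone_nat_of_succ_le fun n => by
    rw [iterDeriv, Function.iterate_succ_apply']
    exact (isClosed_iff_derivedSet_subset _).mp (isClosed_iterDeriv hA n)

theorem image_pow_mul_iterDeriv_mul {K : Set ℝ} {ρ : ℝ} {μ : ℕ} (hρ : ρ ≠ 0)
    (hK : (ρ * ·) '' iterDeriv K μ = K) (k : ℕ) :
    (ρ ^ k * ·) '' iterDeriv K (μ * k) = K := by
  induction k with
  | zero => simp [iterDeriv]
  | succ k ih =>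
    have hscale : (ρ ^ (k + 1) * ·) = (ρ * ·) ∘ (ρ ^ k * ·) := by
      funext x; simp only [Function.comp_apply, pow_succ]; ring
    rw [hscale, image_comp, mul_add_one, add_comm (μ * k), iterDeriv_add,
      ← iterDeriv_image_mul (pow_ne_zero k hρ), ih, hK]

theorem nonpos_of_forall_pow_mul_le {α : Type*} [Field α] [LinearOrder α]
    [IsStrictOrderedRing α] [Archimedean α] {ρ x M : α} (hρ : 1 < ρ)
    (h : ∀ k : ℕ, ρ ^ k * x ≤ M) : x ≤ 0 := by
  by_contra! hx
  obtain ⟨k, hk⟩ := pow_unbounded_of_one_lt (M / x) hρ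
  exact (h k).not_gt ((div_lt_iff₀ hx).mp hk)

section SelfSimilarity

variable {K : Set ℝ} {ρ : ℝ} {μ : ℕ}

theorem iInter_iterDeriv_subset_zero (hbdd : BddAbove K) (hK0 : K ⊆ Ici 0) (hρ : 1 < ρ)
    (hK : (ρ * ·) '' iterDeriv K μ = K) : ⋂ n, iterDeriv K n ⊆ {0} := by
  obtain ⟨M, hM⟩ := hbdd
  intro x hx
  rw [mem_iInter] at hx
  have hpow_mul_mem : ∀ k : ℕ, ρ ^ k * x ∈ K := fun k =>
    image_pow_mul_iterDeriv_mul (by positivity) hK k ▸ mem_image_of_mem _ (hx (μ * k))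
  exact le_antisymm (nonpos_of_forall_pow_mul_le hρ fun k => hM (hpow_mul_mem k))
    (hK0 (hx 0))

theorem iInter_iterDeriv_nonempty (hKc : IsCompact K) (hKne : K.Nonempty) (hρ : ρ ≠ 0)
    (hμ : 1 ≤ μ) (hK : (ρ * ·) '' iterDeriv K μ = K) : (⋂ n, iterDeriv K n).Nonempty := by
  have hne : ∀ n, (iterDeriv K n).Nonempty := fun n =>
    (image_nonempty.mp (image_pow_mul_iterDeriv_mul hρ hK n ▸ hKne)).mono
      (iterDeriv_antitone hKc.isClosed (Nat.le_mul_of_pos_left n hμ))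
  exact IsCompact.nonempty_iInter_of_sequence_nonempty_isCompact_isClosed _
    (fun n => iterDeriv_antitone hKc.isClosed n.le_succ) hne hKc
    (isClosed_iterDeriv hKc.isClosed)

end SelfSimilarity

theorem OrdEnum.e_wOmega_le {K : Set ℝ} (E : OrdEnum K) {x : ℝ} (hx : x ∈ K) :
    E.e wOmega ≤ x := by
  obtain ⟨α, hα, rfl⟩ := E.surj x hx
  rcases hα.lt_or_eq with hlt | rfl
  · exact ((E.anti hα le_rfl).mp hlt).le
  · exact le_rfl

theorem iInter_iterDeriv_eq_singleton_zero (K : Set ℝ) (ρ : ℝ) (μ : ℕ)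
    (h : SelfSimilar K ρ μ) (E : OrdEnum K) :
    (⋂ n : ℕ, iterDeriv K n) = {0} ∧ E.e wOmega = 0 := by
  obtain ⟨hKc, hK0, hρ, hμ, hK, -⟩ := h
  have hKne : K.Nonempty := ⟨E.e 0, E.mem 0 zero_le⟩
  have hInter : (⋂ n : ℕ, iterDeriv K n) = {0} :=
    (iInter_iterDeriv_nonempty hKc hKne (by positivity) hμ hK).subset_singleton_iff.mp
      (iInter_iterDeriv_subset_zero hKc.bddAbove hK0 hρ hK)
  have h0K : (0 : ℝ) ∈ K := mem_iInter.mp (hInter.ge (mem_singleton 0)) 0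
  exact ⟨hInter, (E.e_wOmega_le h0K).antisymm (hK0 (E.mem _ le_rfl))⟩
end

section
/- Let K ⊆ ℝ be compact and well-ordered by the reverse usual order ≼ with order type ω^ω + 1, and let K[α] denote its α-th element. Then for every n ≥ 1 and every ordinal α ≤ ω^ω (where defined), K^(n)[α] = K[ω^n·(1+α)], i.e., the n-th derived set consists exactly of the elements of K indexed by ordinals of the form ω^n·(1+α). -/
open Ordinal Filter Topology Set

open Order

/-! A point of a closed, reverse-well-ordered `K = {K[β] | β ≤ ω ^ ω}` is isolated exactly
when its index is zero or a successor: `K[γ + 1]` lies in the gap `(K[γ + 2], K[γ])` of `K`,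
while at a limit index `β` closedness forces `K[β] = inf {K[γ] | γ < β}`. So `K'` is `K`
re-enumerated along the limit ordinals `ω * (1 + α)`, which is again a closed set of the same
type, and iterating `n` times multiplies the index by `ω ^ n`. -/

lemma omega0_le_wOmega : ω ≤ wOmega :=
  calc ω = ω ^ (1 : Ordinal) := (opow_one ω).symm
    _ ≤ ω ^ ω := opow_le_opow_right omega0_pos one_lt_omega0.le

lemma isSuccLimit_wOmega : IsSuccLimit wOmega :=
  isSuccLimit_opow one_lt_omega0 isSuccLimit_omega0

lemma omega0_mul_le_wOmega_iff {γ : Ordinal} : ω * γ ≤ wOmega ↔ γ ≤ wOmega := by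
  have hfix : ω * wOmega = wOmega := by rw [wOmega, ← opow_one_add, one_add_omega0]
  conv_lhs => rw [← hfix]
  exact mul_le_mul_iff_right₀ omega0_pos

lemma one_add_le_wOmega_iff {γ : Ordinal} : 1 + γ ≤ wOmega ↔ γ ≤ wOmega :=
  ⟨le_add_self.trans, fun h => (add_le_add_right h 1).trans_eq
    (one_add_of_omega0_le omega0_le_wOmega)⟩

lemma isSuccLimit_iff_exists_eq_omega0_mul_one_add {β : Ordinal} :
    IsSuccLimit β ↔ ∃ α, β = ω * (1 + α) := by
  refine ⟨fun h => ?_, ?_⟩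
  · obtain ⟨c, rfl⟩ := isSuccPrelimit_iff_omega0_dvd.mp h.isSuccPrelimit
    have hc : 1 ≤ c := one_le_iff_ne_zero.mpr (by rintro rfl; exact h.ne_bot (mul_zero ω))
    exact ⟨c - 1, by rw [Ordinal.add_sub_cancel_of_le hc]⟩
  · rintro ⟨α, rfl⟩
    exact isSuccLimit_mul_left isSuccLimit_omega0 (zero_lt_one.trans_le le_self_add)

lemma omega0_mul_one_add_opow_mul_one_add {n : ℕ} (hn : 1 ≤ n) (α : Ordinal) :
    ω * (1 + ω ^ (n : Ordinal) * (1 + α)) = ω ^ ((n + 1 : ℕ) : Ordinal) * (1 + α) := by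
  have hω : ω ≤ ω ^ (n : Ordinal) * (1 + α) :=
    calc ω = ω ^ (1 : Ordinal) := (opow_one ω).symm
      _ ≤ ω ^ (n : Ordinal) := opow_le_opow_right omega0_pos (by exact_mod_cast hn)
      _ ≤ ω ^ (n : Ordinal) * (1 + α) := le_mul_of_one_le_right' le_self_add
  rw [one_add_of_omega0_le hω, ← mul_assoc, opow_natCast, opow_natCast, pow_succ']

lemma accPt_of_isGLB {α : Type*} [TopologicalSpace α] [LinearOrder α] [OrderTopology α]
    {s C : Set α} {a : α} (ha : IsGLB s a) (hs : s.Nonempty) (has : a ∉ s) (hsC : s ⊆ C) :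
    AccPt a (𝓟 C) :=
  accPt_iff_frequently.mpr <| (ha.frequently_nhds_mem hs).mono fun _ hy =>
    ⟨ne_of_mem_of_not_mem hy has, hsC hy⟩

lemma not_accPt_of_inter_Ioo_subset {α : Type*} [TopologicalSpace α] [LinearOrder α]
    [OrderTopology α] {s : Set α} {a b x : α} (hax : a < x) (hxb : x < b)
    (hs : s ∩ Ioo a b ⊆ {x}) : ¬ AccPt x (𝓟 s) := by
  rw [accPt_iff_nhds]
  intro h
  obtain ⟨y, ⟨hy, hys⟩, hyx⟩ := h (Ioo a b) (Ioo_mem_nhds hax hxb)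
  exact hyx (hs ⟨hys, hy⟩)

namespace OrdEnum

variable {K : Set ℝ} (E : OrdEnum K) {β : Ordinal.{0}}

lemma le_iff {α : Ordinal.{0}} (hα : α ≤ wOmega) (hβ : β ≤ wOmega) :
    α ≤ β ↔ E.e β ≤ E.e α := by
  rw [← not_lt, ← not_lt, E.anti hβ hα]

lemma le_e_zero {x : ℝ} (hx : x ∈ K) : x ≤ E.e 0 := by
  obtain ⟨δ, hδ, rfl⟩ := E.surj x hx
  exact (E.le_iff zero_le hδ).mp zero_le

lemma le_e_add_one_or_e_le {x : ℝ} (hβ : β < wOmega) (hx : x ∈ K) :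
    x ≤ E.e (β + 1) ∨ E.e β ≤ x := by
  obtain ⟨δ, hδ, rfl⟩ := E.surj x hx
  rcases le_or_gt δ β with h | h
  · exact .inr ((E.le_iff hδ hβ.le).mp h)
  · exact .inl ((E.le_iff (add_one_le_of_lt hβ) hδ).mp (add_one_le_of_lt h))

lemma not_accPt_of_not_isSuccLimit (hβ : β ≤ wOmega) (hlim : ¬ IsSuccLimit β) :
    ¬ AccPt (E.e β) (𝓟 K) := by
  have hβ' : β < wOmega := hβ.lt_of_ne (by rintro rfl; exact hlim isSuccLimit_wOmega)
  obtain ⟨b, hb, hKb⟩ : ∃ b, E.e β < b ∧ ∀ x ∈ K, x < b → x ≤ E.e β := by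
    rcases zero_or_succ_or_isSuccLimit β with rfl | ⟨γ, rfl⟩ | h
    · exact ⟨E.e 0 + 1, lt_add_one _, fun x hx _ => E.le_e_zero hx⟩
    · have hγ : γ < wOmega := (lt_succ γ).trans hβ'
      rw [succ_eq_add_one] at hβ ⊢
      exact ⟨E.e γ, (E.anti hγ.le hβ).mp (lt_add_one γ),
        fun x hx hxb => (E.le_e_add_one_or_e_le hγ hx).resolve_right hxb.not_ge⟩
    · exact absurd h hlim
  refine not_accPt_of_inter_Ioo_subset ((E.anti hβ (add_one_le_of_lt hβ')).mp (lt_add_one β))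
    hb ?_
  rintro x ⟨hxK, hax, hxb⟩
  exact le_antisymm (hKb x hxK hxb) ((E.le_e_add_one_or_e_le hβ' hxK).resolve_left hax.not_ge)

lemma image_Iio_subset (hβ : β ≤ wOmega) : E.e '' Iio β ⊆ K := by
  rintro _ ⟨γ, hγ, rfl⟩
  exact E.mem γ (hγ.le.trans hβ)

lemma isGLB_image_Iio (hK : IsClosed K) (hβ : β ≤ wOmega) (hlim : IsSuccLimit β) :
    IsGLB (E.e '' Iio β) (E.e β) := by
  set S := E.e '' Iio β
  have hne : S.Nonempty := ⟨E.e 0, 0, hlim.bot_lt, rfl⟩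
  have hlb : E.e β ∈ lowerBounds S := by
    rintro _ ⟨γ, hγ, rfl⟩
    exact ((E.anti (hγ.le.trans hβ) hβ).mp hγ).le
  suffices sInf S ≤ E.e β from
    le_antisymm this (le_csInf hne hlb) ▸ isGLB_csInf hne ⟨_, hlb⟩
  have hinf : sInf S ∈ K :=
    hK.closure_subset_iff.mpr (E.image_Iio_subset hβ) (csInf_mem_closure hne ⟨_, hlb⟩)
  obtain ⟨η, hη, hηS⟩ := E.surj _ hinf
  rw [← hηS, ← E.le_iff hβ hη]
  by_contra! hηβ
  -- `sInf S = K[η]` with `η < β` would exceed `K[η + 1] ∈ S`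
  have hle : sInf S ≤ E.e (η + 1) :=
    csInf_le ⟨_, hlb⟩ ⟨η + 1, hlim.add_one_lt hηβ, rfl⟩
  rw [← hηS] at hle
  exact hle.not_gt ((E.anti hη (add_one_le_of_lt (hηβ.trans_le hβ))).mp (lt_add_one η))

lemma accPt_of_isSuccLimit (hK : IsClosed K) (hβ : β ≤ wOmega) (hlim : IsSuccLimit β) :
    AccPt (E.e β) (𝓟 K) := by
  refine accPt_of_isGLB (E.isGLB_image_Iio hK hβ hlim) ⟨E.e 0, 0, hlim.bot_lt, rfl⟩ ?_
    (E.image_Iio_subset hβ)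
  rintro ⟨γ, hγ, hγβ⟩
  exact ((E.anti (hγ.le.trans hβ) hβ).mp hγ).ne' hγβ

lemma derivedSet_eq (hK : IsClosed K) :
    derivedSet K = {x | ∃ α, ω * (1 + α) ≤ wOmega ∧ E.e (ω * (1 + α)) = x} := by
  ext x
  constructor
  · intro hx
    obtain ⟨β, hβ, rfl⟩ := E.surj x ((isClosed_iff_derivedSet_subset K).mp hK hx)
    have hlim : IsSuccLimit β := by_contra fun h => E.not_accPt_of_not_isSuccLimit hβ h hx
    obtain ⟨α, rfl⟩ := isSuccLimit_iff_exists_eq_omega0_mul_one_add.mp hlim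
    exact ⟨α, hβ, rfl⟩
  · rintro ⟨α, hα, rfl⟩
    exact E.accPt_of_isSuccLimit hK hα
      (isSuccLimit_iff_exists_eq_omega0_mul_one_add.mpr ⟨α, rfl⟩)

noncomputable def derivedSet (hK : IsClosed K) : OrdEnum (derivedSet K) where
  e α := E.e (ω * (1 + α))
  mem α hα := by
    rw [E.derivedSet_eq hK]
    exact ⟨α, omega0_mul_le_wOmega_iff.mpr (one_add_le_wOmega_iff.mpr hα), rfl⟩
  surj x hx := by
    rw [E.derivedSet_eq hK] at hx
    obtain ⟨α, hα, rfl⟩ := hx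
    exact ⟨α, one_add_le_wOmega_iff.mp (omega0_mul_le_wOmega_iff.mp hα), rfl⟩
  anti α β hα hβ := by
    rw [← E.anti (omega0_mul_le_wOmega_iff.mpr (one_add_le_wOmega_iff.mpr hα))
      (omega0_mul_le_wOmega_iff.mpr (one_add_le_wOmega_iff.mpr hβ)),
      mul_lt_mul_iff_right₀ omega0_pos, add_lt_add_iff_left]

end OrdEnum

lemma iterDeriv_succ (A : Set ℝ) (n : ℕ) : iterDeriv A (n + 1) = iterDeriv (derivedSet A) n :=
  Function.iterate_succ_apply _ n A

theorem iterDeriv_eq_image_limit_ordinals (K : Set ℝ) (hK : IsCompact K) (E : OrdEnum K)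
    (n : ℕ) (hn : 1 ≤ n) :
    iterDeriv K n =
      {x | ∃ α : Ordinal.{0}, Ordinal.omega0 ^ (n : Ordinal) * (1 + α) ≤ wOmega ∧
        E.e (Ordinal.omega0 ^ (n : Ordinal) * (1 + α)) = x} := by
  replace hK := hK.isClosed
  induction n, hn using Nat.le_induction generalizing K with
  | base => simpa [iterDeriv] using E.derivedSet_eq hK
  | succ n hn ih =>
    rw [iterDeriv_succ, ih _ (E.derivedSet hK) (isClosed_derivedSet K)]
    simp only [OrdEnum.derivedSet, ← omega0_mul_one_add_opow_mul_one_add hn,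
      omega0_mul_le_wOmega_iff, one_add_le_wOmega_iff]
end

section
/- Let K ⊆ ℝ be compact and well-ordered by the reverse usual order with order type ω^ω + 1. Then the derived set K' is compact, well-ordered by the reverse usual order, and also has order type ω^ω + 1. -/
open Ordinal Filter Topology Set

/-!
In a closed set `K = {e α | α ≤ o}` listed in decreasing order by ordinals, the points lying
above `e α` are the `e β` with `β < α`; they accumulate at `e α` exactly when `α` is a limit
ordinal, while the points below `e α` stay below `e (α + 1)`. Hence `K'` is listed by the limit
ordinals `≤ ω ^ ω`, which are the ordinals `ω * (1 + δ)` with `δ ≤ ω ^ ω`.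
-/

open Order

namespace Ordinal

theorem isSuccLimit_iff_exists_omega0_mul_one_add {α : Ordinal} :
    IsSuccLimit α ↔ ∃ δ, ω * (1 + δ) = α := by
  constructor
  · intro hα
    obtain ⟨γ, rfl⟩ := isSuccPrelimit_iff_omega0_dvd.1 (isSuccLimit_iff.1 hα).2
    have hγ : 1 ≤ γ := one_le_iff_ne_zero.2 fun h => hα.ne_bot (by simp [h])
    exact ⟨γ - 1, by rw [Ordinal.add_sub_cancel_of_le hγ]⟩
  · rintro ⟨δ, rfl⟩
    exact isSuccLimit_mul_left isSuccLimit_omega0 (zero_lt_one.trans_le (le_self_add ..))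

theorem strictMono_omega0_mul_one_add : StrictMono fun δ : Ordinal => ω * (1 + δ) :=
  fun _ _ h => (mul_lt_mul_iff_right₀ omega0_pos).2 ((add_lt_add_iff_left 1).2 h)

end Ordinal

theorem omega0_mul_one_add_wOmega : ω * (1 + wOmega) = wOmega := by
  rw [wOmega, one_add_of_omega0_le (left_le_opow _ omega0_pos), ← opow_one_add, one_add_omega0]

theorem omega0_mul_one_add_le_wOmega_iff {δ : Ordinal} : ω * (1 + δ) ≤ wOmega ↔ δ ≤ wOmega := by
  conv_lhs => rw [← omega0_mul_one_add_wOmega]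
  exact strictMono_omega0_mul_one_add.le_iff_le

theorem setOf_isSuccLimit_le_wOmega :
    {α ∈ Iic wOmega | IsSuccLimit α} = (fun δ => ω * (1 + δ)) '' Iic wOmega := by
  ext α
  simp only [mem_ofPred_eq, mem_Iic, mem_image, isSuccLimit_iff_exists_omega0_mul_one_add]
  constructor
  · rintro ⟨hα, δ, rfl⟩
    exact ⟨δ, omega0_mul_one_add_le_wOmega_iff.1 hα, rfl⟩
  · rintro ⟨δ, hδ, rfl⟩
    exact ⟨omega0_mul_one_add_le_wOmega_iff.2 hδ, δ, rfl⟩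

theorem image_Iic_diff_singleton {ι X : Type*} [LinearOrder ι] [Preorder X] {e : ι → X} {o α : ι}
    (he : StrictAntiOn e (Iic o)) (hα : α ≤ o) :
    e '' Iic o \ {e α} = e '' Iio α ∪ e '' Ioc α o := by
  have hsplit : Iic o \ {α} = Iio α ∪ Ioc α o := by
    ext β
    simp only [Set.mem_sdiff, mem_Iic, mem_singleton_iff, mem_union, mem_Iio, mem_Ioc]
    constructor
    · rintro ⟨hβ, hne⟩
      exact (lt_or_gt_of_ne hne).imp id fun h => ⟨h, hβ⟩
    · rintro (h | h)
      · exact ⟨h.le.trans hα, h.ne⟩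
      · exact ⟨h.2, h.1.ne'⟩
  rw [← image_union, ← hsplit, he.injOn.image_sdiff,
    inter_eq_right.2 (singleton_subset_iff.2 (mem_Iic.2 hα)), image_singleton]

section DecreasingEnumeration

variable {X : Type*} [ConditionallyCompleteLinearOrder X] [TopologicalSpace X] [OrderTopology X]
  {e : Ordinal → X} {o α : Ordinal}

theorem mem_closure_image_Iio_iff (he : StrictAntiOn e (Iic o)) (hK : IsClosed (e '' Iic o))
    (hα : α ≤ o) : e α ∈ closure (e '' Iio α) ↔ IsSuccLimit α := by
  have hIio : Iio α ⊆ Iic o := fun _ hβ => hβ.le.trans hα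
  constructor
  · intro hmem
    rcases zero_or_succ_or_isSuccLimit α with rfl | ⟨γ, rfl⟩ | hlim
    · simp at hmem
    · have hγ : γ ∈ Iic o := (le_succ γ).trans hα
      have hsub : closure (e '' Iio (succ γ)) ⊆ Ici (e γ) := by
        refine closure_minimal ?_ isClosed_Ici
        rintro _ ⟨β, hβ, rfl⟩
        exact he.antitoneOn (hIio hβ) hγ (lt_succ_iff.1 hβ)
      exact absurd (hsub hmem) (not_le.2 (he hγ hα (lt_succ γ)))
    · exact hlim
  · intro hlim
    set S := e '' Iio α
    have hne : S.Nonempty := ⟨e 0, 0, hlim.pos, rfl⟩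
    have hlb : e α ∈ lowerBounds S := by
      rintro _ ⟨β, hβ, rfl⟩
      exact (he (hIio hβ) hα hβ).le
    have hbdd : BddBelow S := ⟨_, hlb⟩
    obtain ⟨γ, hγ, hγS⟩ : sInf S ∈ e '' Iic o :=
      hK.closure_subset (closure_mono (image_mono hIio) (csInf_mem_closure hne hbdd))
    -- `sInf S = e γ` with `γ < α` would put `e (γ + 1) ∈ S` below `sInf S`
    have hαγ : α ≤ γ := by
      by_contra! hγα
      have hsucc := hlim.succ_lt hγα
      exact (csInf_le hbdd ⟨_, hsucc, rfl⟩).not_gt (hγS ▸ he hγ (hIio hsucc) (lt_succ γ))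
    have hinf : sInf S = e α := le_antisymm (hγS ▸ he.antitoneOn hα hγ hαγ) (le_csInf hne hlb)
    exact hinf ▸ csInf_mem_closure hne hbdd

theorem notMem_closure_image_Ioc (he : StrictAntiOn e (Iic o)) :
    e α ∉ closure (e '' Ioc α o) := by
  rcases lt_or_ge α o with hαo | hoα
  · have hsucc : succ α ≤ o := succ_le_of_lt hαo
    have hsub : closure (e '' Ioc α o) ⊆ Iic (e (succ α)) := by
      refine closure_minimal ?_ isClosed_Iic
      rintro _ ⟨β, ⟨hαβ, hβ⟩, rfl⟩
      exact he.antitoneOn hsucc hβ (succ_le_of_lt hαβ)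
    exact fun h => (hsub h).not_gt (he hαo.le hsucc (lt_succ α))
  · simp [Ioc_eq_empty_of_le hoα]

theorem mem_derivedSet_image_Iic_iff (he : StrictAntiOn e (Iic o)) (hK : IsClosed (e '' Iic o))
    (hα : α ≤ o) : e α ∈ derivedSet (e '' Iic o) ↔ IsSuccLimit α := by
  rw [mem_derivedSet, accPt_principal_iff_clusterPt, ← mem_closure_iff_clusterPt,
    image_Iic_diff_singleton he hα, closure_union, mem_union,
    or_iff_left (notMem_closure_image_Ioc he), mem_closure_image_Iio_iff he hK hα]

theorem derivedSet_image_Iic (he : StrictAntiOn e (Iic o)) (hK : IsClosed (e '' Iic o)) :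
    derivedSet (e '' Iic o) = e '' {α ∈ Iic o | IsSuccLimit α} := by
  ext x
  constructor
  · intro hx
    obtain ⟨α, hα, rfl⟩ := (isClosed_iff_derivedSet_subset _).1 hK hx
    exact ⟨α, ⟨hα, (mem_derivedSet_image_Iic_iff he hK hα).1 hx⟩, rfl⟩
  · rintro ⟨α, ⟨hα, hlim⟩, rfl⟩
    exact (mem_derivedSet_image_Iic_iff he hK hα).2 hlim

end DecreasingEnumeration

namespace OrdEnum

variable {K : Set ℝ}

theorem strictAntiOn (E : OrdEnum K) : StrictAntiOn E.e (Iic wOmega) :=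
  fun _ hα _ hβ h => (E.anti hα hβ).1 h

theorem image_Iic_eq (E : OrdEnum K) : E.e '' Iic wOmega = K :=
  Subset.antisymm (image_subset_iff.2 E.mem) fun x hx => E.surj x hx

def ofStrictAntiOn (e : Ordinal → ℝ) (he : StrictAntiOn e (Iic wOmega))
    (himg : e '' Iic wOmega = K) : OrdEnum K where
  e := e
  mem α hα := himg ▸ mem_image_of_mem e hα
  surj x hx := by rw [← himg] at hx; exact hx
  anti _ _ hα hβ := (he.lt_iff_gt hβ hα).symm

end OrdEnum

theorem derivedSet_compact_ordEnum (K : Set ℝ) (hK : IsCompact K) (E : OrdEnum K) :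
    IsCompact (derivedSet K) ∧ Nonempty (OrdEnum (derivedSet K)) := by
  have hKc : IsClosed (E.e '' Iic wOmega) := by rw [E.image_Iic_eq]; exact hK.isClosed
  refine ⟨hK.of_isClosed_subset (isClosed_derivedSet K)
    ((isClosed_iff_derivedSet_subset K).1 hK.isClosed),
    ⟨OrdEnum.ofStrictAntiOn (E.e ∘ fun δ => ω * (1 + δ)) ?_ ?_⟩⟩
  · exact E.strictAntiOn.comp_strictMonoOn (strictMono_omega0_mul_one_add.strictMonoOn _)
      fun _ hδ => omega0_mul_one_add_le_wOmega_iff.2 hδ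
  · rw [image_comp, ← setOf_isSuccLimit_le_wOmega, ← derivedSet_image_Iic E.strictAntiOn hKc,
      E.image_Iic_eq]
end

section
/- The identity 73·(3^20 + 1) + 6 = 2^3·((((3^8+1)·(3^6+1)·3^2+1)·(3^4+1)+1)·3^2+1+1) holds, and consequently ‖73·(3^20+1)+6‖ ≤ 79. -/
lemma ec_three : ExprCost 3 3 := by
  have h : ExprCost (1 + 1 + 1) (1 + 1 + 1) :=
    .add (.add .one .one) .one
  simpa using h

lemma ec_pow3 (k : ℕ) : ExprCost (3 ^ (k + 1)) (3 * (k + 1)) := by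
  induction k with
  | zero => simpa using ec_three
  | succ n ih =>
    have h := ExprCost.mul ih ec_three
    have : ExprCost (3 ^ (n + 1) * 3) (3 * (n + 1) + 3) := h
    simpa [pow_succ, Nat.mul_add] using this

lemma ec_succ {n c : ℕ} (h : ExprCost n c) : ExprCost (n + 1) (c + 1) :=
  .add h .one

theorem seventy_three_identity :
    73 * (3 ^ 20 + 1) + 6 =
      2 ^ 3 * ((((3 ^ 8 + 1) * (3 ^ 6 + 1) * 3 ^ 2 + 1) * (3 ^ 4 + 1) + 1) * 3 ^ 2 + 1 + 1) ∧
    cpx (73 * (3 ^ 20 + 1) + 6) ≤ 79 := by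
  constructor
  · norm_num
  · have h8 : ExprCost (3 ^ 8 + 1) 25 := ec_succ (ec_pow3 7)
    have h6 : ExprCost (3 ^ 6 + 1) 19 := ec_succ (ec_pow3 5)
    have h2 : ExprCost (3 ^ 2) 6 := ec_pow3 1
    have h4 : ExprCost (3 ^ 4 + 1) 13 := ec_succ (ec_pow3 3)
    have hA : ExprCost ((3 ^ 8 + 1) * (3 ^ 6 + 1) * 3 ^ 2 + 1) 51 :=
      ec_succ (.mul (.mul h8 h6) h2)
    have hB : ExprCost (((3 ^ 8 + 1) * (3 ^ 6 + 1) * 3 ^ 2 + 1) * (3 ^ 4 + 1) + 1) 65 :=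
      ec_succ (.mul hA h4)
    have hC : ExprCost ((((3 ^ 8 + 1) * (3 ^ 6 + 1) * 3 ^ 2 + 1) * (3 ^ 4 + 1) + 1) * 3 ^ 2 + 1 + 1) 73 :=
      ec_succ (ec_succ (.mul hB h2))
    have h23 : ExprCost (2 ^ 3) 6 := by
      have : ExprCost ((1 + 1) * ((1 + 1) * (1 + 1))) ((1 + 1) + ((1 + 1) + (1 + 1))) :=
        .mul (.add .one .one) (.mul (.add .one .one) (.add .one .one))
      simpa using this
    have hfin : ExprCost (73 * (3 ^ 20 + 1) + 6) 79 := by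
      have := ExprCost.mul h23 hC
      have heq : 73 * (3 ^ 20 + 1) + 6 =
          2 ^ 3 * ((((3 ^ 8 + 1) * (3 ^ 6 + 1) * 3 ^ 2 + 1) * (3 ^ 4 + 1) + 1) * 3 ^ 2 + 1 + 1) := by
        norm_num
      rw [heq]
      exact this
    exact Nat.sInf_le hfin
end
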